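/- arXiv:1904.00166 — 2 statements merged into one kernel-verified Lean document; each statement's English description precedes it below -/
import Mathlib

section
/- Let N ≥ 1 and define σ : Fin N → Fin N → ℂ by σ(i,j) = −1 if i < j and σ(i,j) = +1 if i ≥ j. Define three matrices on (Fin N × Fin N): S_{(i,j),(k,l)} = [i = l]·[j = k]·σ(i,j)·σ(k,l); Flip_{(i,j),(k,l)} = [i = l]·[j = k]; and P_{(i,j),(k,l)} = [i = j]·[j = k]·[k = l] (here [·] is 1 if the condition holds and 0 otherwise). Then S = −Flip + 2·P. -/
/-! Entries of both sides vanish unless `p = (i, j)` and `q = (j, i)`, where the left side is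
`σ(i,j) σ(j,i)`. This is `-1` off the diagonal, since exactly one of `i < j`, `j < i` holds,
and `1 = -1 + 2` on it, which is the contribution of `P`. -/

theorem sign_mul_sign_swap {α R : Type*} [LinearOrder α] [Ring R] (i j : α) :
    (if i < j then (-1 : R) else 1) * (if j < i then -1 else 1) =
      -1 + 2 * (if i = j then 1 else 0) := by
  rcases lt_trichotomy i j with h | rfl | h
  · simp [h, h.not_gt, h.ne]
  · norm_num
  · simp [h, h.not_gt, h.ne']

theorem stmt_9_general (N : ℕ) :
    (Matrix.of fun p q : Fin N × Fin N =>
        (if p.1 = q.2 then (1 : ℂ) else 0) * (if p.2 = q.1 then 1 else 0) *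
        (if p.1 < p.2 then -1 else 1) * (if q.1 < q.2 then -1 else 1)) =
    -(Matrix.of fun p q : Fin N × Fin N =>
        (if p.1 = q.2 then (1 : ℂ) else 0) * (if p.2 = q.1 then 1 else 0)) +
    2 • (Matrix.of fun p q : Fin N × Fin N =>
        (if p.1 = p.2 then (1 : ℂ) else 0) * (if p.2 = q.1 then 1 else 0) *
        (if q.1 = q.2 then 1 else 0)) := by
  ext ⟨i, j⟩ ⟨k, l⟩
  simp only [Matrix.add_apply, Matrix.neg_apply, Matrix.smul_apply, Matrix.of_apply]
  by_cases hil : i = l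
  · by_cases hjk : j = k
    · subst hil hjk
      rw [if_pos rfl, if_pos rfl, one_mul, one_mul, sign_mul_sign_swap, eq_comm]
      by_cases hij : i = j
      · subst hij; norm_num
      · simp [hij, Ne.symm hij]
    · simp [hjk]
  · split_ifs <;> subst_vars <;> simp_all

theorem stmt_9 (N : ℕ) (hN : 1 ≤ N) :
    (Matrix.of fun p q : Fin N × Fin N =>
        (if p.1 = q.2 then (1 : ℂ) else 0) * (if p.2 = q.1 then 1 else 0) *
        (if p.1 < p.2 then -1 else 1) * (if q.1 < q.2 then -1 else 1)) =
    -(Matrix.of fun p q : Fin N × Fin N =>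
        (if p.1 = q.2 then (1 : ℂ) else 0) * (if p.2 = q.1 then 1 else 0)) +
    2 • (Matrix.of fun p q : Fin N × Fin N =>
        (if p.1 = p.2 then (1 : ℂ) else 0) * (if p.2 = q.1 then 1 else 0) *
        (if q.1 = q.2 then 1 else 0)) :=
  stmt_9_general N
end

section
/- Let N ≥ 1 be an integer and define v : Fin N → Fin N → Fin N → ℂ by v(i,j,k) = N²·[i = j ∧ j = k] − N·([i = j] + [j = k] + [i = k]) + 2, where [·] denotes the indicator (1 if true, 0 if false). Then: (a) for every k, ∑_{i} v(i,i,k) = 0; (b) for every i, ∑_{j} v(i,j,j) = 0; (c) for every j, ∑_{i} v(i,j,i) = 0; and (d) for every i, ∑_{j,k} v(i,j,k) = 0. -/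
/-!
Every contraction is a polynomial in `N` read off from the number of free indices: summing an
indicator `[i = j]` over a free index gives `1` or `N`. For the diagonal contraction
`∑ᵢ v(i,i,k)` this gives `N² - N (N + 2) + 2 N = 0`, and for the full contraction
`∑ⱼₖ v(i,j,k)` it gives `N² - 3 N² + 2 N² = 0`. The other two diagonal contractions reduce to
the first one because `v` is symmetric in its three indices.
-/

open Finset

section PartitionCombCoeff

variable {ι R : Type*} [Fintype ι] [DecidableEq ι] [CommRing R]

def partitionCombCoeff (i j k : ι) : R :=
  (Fintype.card ι : R) ^ 2 * (if i = j ∧ j = k then 1 else 0) -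
    (Fintype.card ι : R) * ((if i = j then 1 else 0) + (if j = k then 1 else 0) +
      (if i = k then 1 else 0)) + 2

theorem partitionCombCoeff_swap₂₃ (i j k : ι) :
    (partitionCombCoeff i j k : R) = partitionCombCoeff i k j := by
  unfold partitionCombCoeff
  split_ifs <;> grind

theorem partitionCombCoeff_swap₁₃ (i j k : ι) :
    (partitionCombCoeff i j k : R) = partitionCombCoeff k j i := by
  unfold partitionCombCoeff
  split_ifs <;> grind

theorem sum_partitionCombCoeff_diag₁₂ (k : ι) :
    ∑ i, (partitionCombCoeff i i k : R) = 0 := by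
  simp only [partitionCombCoeff, true_and, if_true, sum_add_distrib, sum_sub_distrib,
    ← mul_sum, sum_ite_eq', mem_univ, sum_const, card_univ, nsmul_eq_mul]
  ring

theorem sum_partitionCombCoeff_diag₂₃ (i : ι) :
    ∑ j, (partitionCombCoeff i j j : R) = 0 := by
  simp only [partitionCombCoeff_swap₁₃ i, sum_partitionCombCoeff_diag₁₂]

theorem sum_partitionCombCoeff_diag₁₃ (j : ι) :
    ∑ i, (partitionCombCoeff i j i : R) = 0 := by
  simp only [partitionCombCoeff_swap₂₃ _ j, sum_partitionCombCoeff_diag₁₂]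

theorem sum_sum_partitionCombCoeff (i : ι) :
    ∑ j, ∑ k, (partitionCombCoeff i j k : R) = 0 := by
  simp only [partitionCombCoeff, ite_and, sum_ite_irrel, sum_const_zero, sum_add_distrib,
    sum_sub_distrib, ← mul_sum, sum_ite_eq, mem_univ, if_true, sum_const, card_univ, nsmul_eq_mul]
  ring

end PartitionCombCoeff

theorem stmt_11_general (N : ℕ)
    (v : Fin N → Fin N → Fin N → ℂ)
    (hv : ∀ i j k, v i j k =
      (N : ℂ) ^ 2 * (if i = j ∧ j = k then 1 else 0) -
      (N : ℂ) * ((if i = j then 1 else 0) + (if j = k then 1 else 0) +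
        (if i = k then 1 else 0)) + 2) :
    (∀ k, ∑ i, v i i k = 0) ∧
    (∀ i, ∑ j, v i j j = 0) ∧
    (∀ j, ∑ i, v i j i = 0) ∧
    (∀ i, ∑ j, ∑ k, v i j k = 0) := by
  have hv' : v = partitionCombCoeff := by
    ext i j k
    rw [hv, partitionCombCoeff, Fintype.card_fin]
  subst hv'
  exact ⟨sum_partitionCombCoeff_diag₁₂, sum_partitionCombCoeff_diag₂₃,
    sum_partitionCombCoeff_diag₁₃, sum_sum_partitionCombCoeff⟩

theorem stmt_11 (N : ℕ) (hN : 1 ≤ N)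
    (v : Fin N → Fin N → Fin N → ℂ)
    (hv : ∀ i j k, v i j k =
      (N : ℂ) ^ 2 * (if i = j ∧ j = k then 1 else 0) -
      (N : ℂ) * ((if i = j then 1 else 0) + (if j = k then 1 else 0) +
        (if i = k then 1 else 0)) + 2) :
    (∀ k, ∑ i, v i i k = 0) ∧
    (∀ i, ∑ j, v i j j = 0) ∧
    (∀ j, ∑ i, v i j i = 0) ∧
    (∀ i, ∑ j, ∑ k, v i j k = 0) :=
  stmt_11_general N v hv
end
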